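/- arXiv:1106.4581 — 4 statements merged into one kernel-verified Lean document; each statement's English description precedes it below -/
import Mathlib

section
/- For every d ≥ 2, K ≥ 1 and M ≥ 0 there exists a radius R > 0, depending only on d, K and M, such that for every bounded sequence of polynomials {P_m}_{m≥1} with bounds d, K, M, every m ≥ 0, and every z ∈ ℂ with |z| > R, one has |Q_{m,n}(z)| → ∞ as n → ∞. -/
open Filter Topology Polynomial
open scoped OnePoint

/-- The spherical (chordal) metric on the Riemann sphere `ℂ̂ = ℂ ∪ {∞}`. -/
noncomputable def sphDist : OnePoint ℂ → OnePoint ℂ → ℝ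
  | (x : ℂ), (y : ℂ) => 2 * ‖x - y‖ /
      (Real.sqrt (1 + ‖x‖ ^ 2) * Real.sqrt (1 + ‖y‖ ^ 2))
  | (x : ℂ), ∞ => 2 / Real.sqrt (1 + ‖x‖ ^ 2)
  | ∞, (y : ℂ) => 2 / Real.sqrt (1 + ‖y‖ ^ 2)
  | ∞, ∞ => 0

/-- A bounded sequence of polynomials with bounds `d`, `K`, `M`:
for every `m ≥ 1`, `2 ≤ deg P_m ≤ d`, `1/K ≤ |leading coeff| ≤ K` and all the
lower order coefficients have absolute value at most `M`. -/
def IsBoundedSeq (d : ℕ) (K M : ℝ) (P : ℕ → Polynomial ℂ) : Prop :=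
  ∀ m, 1 ≤ m →
    2 ≤ (P m).natDegree ∧ (P m).natDegree ≤ d ∧
    1 / K ≤ ‖(P m).leadingCoeff‖ ∧ ‖(P m).leadingCoeff‖ ≤ K ∧
    ∀ k, k < (P m).natDegree → ‖(P m).coeff k‖ ≤ M

/-- `Q_{m,n} = P_n ∘ ⋯ ∘ P_{m+1}` on `ℂ` (the identity when `n ≤ m`). -/
noncomputable def Qc (P : ℕ → Polynomial ℂ) (m n : ℕ) (z : ℂ) : ℂ :=
  (List.range (n - m)).foldl (fun w k => (P (m + k + 1)).eval w) z

/-- The extension of `Q_{m,n}` to the Riemann sphere, with `∞ ↦ ∞`. -/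
noncomputable def Qhat (P : ℕ → Polynomial ℂ) (m n : ℕ) : OnePoint ℂ → OnePoint ℂ :=
  OnePoint.map (Qc P m n)

/-- `f j → g` uniformly on compact subsets of `N`, with respect to the spherical metric. -/
def UnifConvOnCompacts (N : Set (OnePoint ℂ)) (f : ℕ → OnePoint ℂ → OnePoint ℂ)
    (g : OnePoint ℂ → OnePoint ℂ) : Prop :=
  ∀ C : Set (OnePoint ℂ), C ⊆ N → IsCompact C → ∀ ε > (0 : ℝ), ∃ j₀ : ℕ, ∀ j ≥ j₀,
    ∀ z ∈ C, sphDist (f j z) (g z) < ε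

/-- The family `{Q_{m,n}}_{n ≥ m}` is normal on the open set `N`: every sequence from
the family has a subsequence converging locally uniformly on `N` with respect to the
spherical metric. -/
def NormalOn (P : ℕ → Polynomial ℂ) (m : ℕ) (N : Set (OnePoint ℂ)) : Prop :=
  ∀ k : ℕ → ℕ, (∀ j, m ≤ k j) → ∃ s : ℕ → ℕ, StrictMono s ∧
    ∃ g : OnePoint ℂ → OnePoint ℂ,
      UnifConvOnCompacts N (fun j => Qhat P m (k (s j))) g

/-- The Fatou set at time `m`. -/
def Fatou (P : ℕ → Polynomial ℂ) (m : ℕ) : Set (OnePoint ℂ) :=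
  {z | ∃ N : Set (OnePoint ℂ), IsOpen N ∧ z ∈ N ∧ NormalOn P m N}

/-- The iterated Julia set at time `m`. -/
def Julia (P : ℕ → Polynomial ℂ) (m : ℕ) : Set (OnePoint ℂ) :=
  (Fatou P m)ᶜ

/-- The basin at infinity at time `m`: points `z` with `Q_{m,n}(z) → ∞` as `n → ∞`
in the spherical metric. -/
def BasinInfty (P : ℕ → Polynomial ℂ) (m : ℕ) : Set (OnePoint ℂ) :=
  {z | Tendsto (fun n => sphDist (Qhat P m n z) ∞) atTop (𝓝 0)}

/-- The filled Julia set at time `m`. -/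
def FilledJulia (P : ℕ → Polynomial ℂ) (m : ℕ) : Set (OnePoint ℂ) :=
  (BasinInfty P m)ᶜ

/-!
Once `‖w‖ ≥ K (M d + 2)`, the leading term of every `P_m` dominates the others so strongly
that `‖P_m(w)‖ ≥ 2 ‖w‖`. This region is therefore mapped into itself, and along any orbit
starting in it the modulus at least doubles at every step.
-/

lemma norm_leadingCoeff_mul_pow_sub_le_norm_eval {𝕜 : Type*} [NormedDivisionRing 𝕜]
    (p : 𝕜[X]) {M : ℝ} (hcoeff : ∀ k < p.natDegree, ‖p.coeff k‖ ≤ M) {w : 𝕜} (hw : 1 ≤ ‖w‖) :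
    ‖p.leadingCoeff‖ * ‖w‖ ^ p.natDegree - M * p.natDegree * ‖w‖ ^ (p.natDegree - 1) ≤
      ‖p.eval w‖ := by
  set n := p.natDegree
  have hlower : ‖∑ i ∈ Finset.range n, p.coeff i * w ^ i‖ ≤ M * n * ‖w‖ ^ (n - 1) := by
    calc ‖∑ i ∈ Finset.range n, p.coeff i * w ^ i‖
        ≤ ∑ i ∈ Finset.range n, ‖p.coeff i‖ * ‖w‖ ^ i := by
          simpa only [norm_mul, norm_pow] using
            norm_sum_le (Finset.range n) fun i => p.coeff i * w ^ i
      _ ≤ ∑ _i ∈ Finset.range n, M * ‖w‖ ^ (n - 1) := by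
          refine Finset.sum_le_sum fun i hi => ?_
          have hin : i < n := Finset.mem_range.mp hi
          calc ‖p.coeff i‖ * ‖w‖ ^ i ≤ ‖p.coeff i‖ * ‖w‖ ^ (n - 1) := by
                gcongr
                omega
            _ ≤ M * ‖w‖ ^ (n - 1) := by gcongr; exact hcoeff i hin
      _ = M * n * ‖w‖ ^ (n - 1) := by
          rw [Finset.sum_const, Finset.card_range, nsmul_eq_mul]; ring
  have heval : p.eval w = p.leadingCoeff * w ^ n + ∑ i ∈ Finset.range n, p.coeff i * w ^ i := by
    rw [eval_eq_sum_range, Finset.sum_range_succ, add_comm, Polynomial.leadingCoeff]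
  calc ‖p.leadingCoeff‖ * ‖w‖ ^ n - M * n * ‖w‖ ^ (n - 1)
      ≤ ‖p.leadingCoeff * w ^ n‖ - ‖∑ i ∈ Finset.range n, p.coeff i * w ^ i‖ := by
        rw [norm_mul, norm_pow]; linarith
    _ ≤ ‖p.eval w‖ := by rw [heval]; exact norm_sub_le_norm_add _ _

lemma two_mul_norm_le_norm_eval {𝕜 : Type*} [NormedDivisionRing 𝕜] (p : 𝕜[X]) {d : ℕ}
    {K M : ℝ} (hK : 1 ≤ K) (hM : 0 ≤ M) (hdeg : 2 ≤ p.natDegree) (hdeg_le : p.natDegree ≤ d)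
    (hlc : 1 / K ≤ ‖p.leadingCoeff‖) (hcoeff : ∀ k < p.natDegree, ‖p.coeff k‖ ≤ M) {w : 𝕜}
    (hw : K * (M * d + 2) ≤ ‖w‖) :
    2 * ‖w‖ ≤ ‖p.eval w‖ := by
  set n := p.natDegree
  have hw1 : 1 ≤ ‖w‖ := by nlinarith [mul_nonneg hM (Nat.cast_nonneg (α := ℝ) d)]
  have hlead : M * n + 2 ≤ ‖p.leadingCoeff‖ * ‖w‖ := by
    have : M * n ≤ M * d := by gcongr
    calc M * n + 2 ≤ ‖w‖ / K := by rw [le_div_iff₀ (by linarith)]; nlinarith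
      _ = 1 / K * ‖w‖ := by ring
      _ ≤ ‖p.leadingCoeff‖ * ‖w‖ := by gcongr
  have hpow : ‖w‖ ^ n = ‖w‖ ^ (n - 1) * ‖w‖ := by rw [← pow_succ, Nat.sub_add_cancel (by omega)]
  have hw_le_pow : ‖w‖ ≤ ‖w‖ ^ (n - 1) := le_self_pow₀ hw1 (by omega)
  calc 2 * ‖w‖ ≤ ‖w‖ ^ (n - 1) * 2 := by linarith
    _ ≤ ‖w‖ ^ (n - 1) * (‖p.leadingCoeff‖ * ‖w‖ - M * n) := by gcongr; linarith
    _ = ‖p.leadingCoeff‖ * ‖w‖ ^ n - M * n * ‖w‖ ^ (n - 1) := by rw [hpow]; ring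
    _ ≤ ‖p.eval w‖ := norm_leadingCoeff_mul_pow_sub_le_norm_eval p hcoeff hw1

lemma Qc_self (P : ℕ → Polynomial ℂ) (m : ℕ) (z : ℂ) : Qc P m m z = z := by
  simp [Qc]

lemma Qc_succ (P : ℕ → Polynomial ℂ) (m j : ℕ) (z : ℂ) :
    Qc P m (m + j + 1) z = (P (m + j + 1)).eval (Qc P m (m + j) z) := by
  simp only [Qc, Nat.add_sub_cancel_left, show m + j + 1 - m = j + 1 by omega, List.range_succ,
    List.foldl_append, List.foldl_cons, List.foldl_nil]

section Orbit

variable {P : ℕ → Polynomial ℂ} {m : ℕ}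

lemma pow_two_mul_norm_le_norm_Qc {R : ℝ}
    (hP : ∀ k, m < k → ∀ w : ℂ, R < ‖w‖ → 2 * ‖w‖ ≤ ‖(P k).eval w‖) {z : ℂ} (hz : R < ‖z‖)
    (j : ℕ) : 2 ^ j * ‖z‖ ≤ ‖Qc P m (m + j) z‖ := by
  induction j with
  | zero => simp [Qc_self]
  | succ j ih =>
    have hescaped : R < ‖Qc P m (m + j) z‖ :=
      hz.trans_le ((le_mul_of_one_le_left (norm_nonneg z) (one_le_pow₀ one_le_two)).trans ih)
    rw [← add_assoc, Qc_succ, pow_succ]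
    calc 2 ^ j * 2 * ‖z‖ ≤ 2 * ‖Qc P m (m + j) z‖ := by linarith
      _ ≤ _ := hP _ (by omega) _ hescaped

lemma tendsto_norm_Qc_atTop {R : ℝ} (hR : 0 ≤ R)
    (hP : ∀ k, m < k → ∀ w : ℂ, R < ‖w‖ → 2 * ‖w‖ ≤ ‖(P k).eval w‖) {z : ℂ} (hz : R < ‖z‖) :
    Tendsto (fun n => ‖Qc P m n z‖) atTop atTop := by
  rw [← tendsto_add_atTop_iff_nat m]
  refine tendsto_atTop_mono (fun j => ?_)
    ((tendsto_pow_atTop_atTop_of_one_lt one_lt_two).atTop_mul_const (hR.trans_lt hz))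
  simpa only [add_comm j m] using pow_two_mul_norm_le_norm_Qc hP hz j

end Orbit

theorem exists_escape_radius_general (d : ℕ) (K M : ℝ) (hK : 1 ≤ K) (hM : 0 ≤ M) :
    ∃ R > (0 : ℝ), ∀ P : ℕ → Polynomial ℂ, IsBoundedSeq d K M P →
      ∀ m : ℕ, ∀ z : ℂ, R < ‖z‖ →
        Tendsto (fun n => ‖Qc P m n z‖) atTop atTop := by
  have hK₀ : 0 < K := by linarith
  have hR : 0 < K * (M * d + 2) := by positivity
  refine ⟨K * (M * d + 2), hR, fun P hP m z hz => tendsto_norm_Qc_atTop hR.le ?_ hz⟩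
  intro k hk w hw
  obtain ⟨hdeg, hdeg_le, hlc, -, hcoeff⟩ := hP k (by omega)
  exact two_mul_norm_le_norm_eval (P k) hK hM hdeg hdeg_le hlc hcoeff hw.le

/-- Existence of an escape radius depending only on the bounds `d`, `K`, `M`:
all points of modulus greater than `R` escape to infinity under any bounded
sequence of polynomials with these bounds. -/
theorem exists_escape_radius (d : ℕ) (K M : ℝ) (hd : 2 ≤ d) (hK : 1 ≤ K) (hM : 0 ≤ M) :
    ∃ R > (0 : ℝ), ∀ P : ℕ → Polynomial ℂ, IsBoundedSeq d K M P →
      ∀ m : ℕ, ∀ z : ℂ, R < ‖z‖ →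
        Tendsto (fun n => ‖Qc P m n z‖) atTop atTop :=
  exists_escape_radius_general d K M hK hM
end

section
/- Let N ≥ 1 and let (U_n, u_n) be a sequence of pointed domains in the Riemann sphere ℂ̂ converging in the Carathéodory topology to a (non-degenerate) pointed domain (U, u). If for every n the complement ℂ̂ ∖ U_n has at most N connected components (i.e. each U_n is at most N-connected), then ℂ̂ ∖ U has at most N connected components, i.e. U is at most N-connected. -/
open Filter Topology Set
open scoped OnePoint

/-- A pointed domain: an open connected subset of the Riemann sphere together with
a base point belonging to it. -/
def IsPointedDomain (U : Set (OnePoint ℂ)) (u : OnePoint ℂ) : Prop :=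
  IsOpen U ∧ IsConnected U ∧ u ∈ U

/-- Carathéodory convergence of the pointed domains `(Us n, us n)` to a
(non-degenerate) pointed domain `(U, u)`:
(1) `us n → u`; (2) every compact subset of `U` is contained in `Us n` for all but
finitely many `n`; (3) every connected open set containing `u` which is contained in
infinitely many of the `Us n` is contained in `U`. -/
def CaraTendsto (Us : ℕ → Set (OnePoint ℂ)) (us : ℕ → OnePoint ℂ)
    (U : Set (OnePoint ℂ)) (u : OnePoint ℂ) : Prop :=
  Tendsto us atTop (𝓝 u) ∧
  (∀ C : Set (OnePoint ℂ), C ⊆ U → IsCompact C → ∀ᶠ n in atTop, C ⊆ Us n) ∧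
  (∀ N : Set (OnePoint ℂ), IsOpen N → IsConnected N → u ∈ N →
    {n | N ⊆ Us n}.Infinite → N ⊆ U)

/-- Carathéodory convergence of the pointed domains `(Us n, us n)` to the degenerate
pair `({u}, u)`: `us n → u` and every connected open set containing `u` is contained
in at most finitely many of the sets `Us n`. -/
def CaraTendstoDeg (Us : ℕ → Set (OnePoint ℂ)) (us : ℕ → OnePoint ℂ)
    (u : OnePoint ℂ) : Prop :=
  Tendsto us atTop (𝓝 u) ∧
  (∀ N : Set (OnePoint ℂ), IsOpen N → IsConnected N → u ∈ N → {n | N ⊆ Us n}.Finite)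

/-- The Hausdorff distance between two subsets of the Riemann sphere with respect to
the spherical metric. -/
noncomputable def sphHausdorffDist (A B : Set (OnePoint ℂ)) : ℝ :=
  max (⨆ a ∈ A, ⨅ b ∈ B, sphDist a b) (⨆ b ∈ B, ⨅ a ∈ A, sphDist a b)

/-!
Suppose `Uᶜ` had `N + 1` components. Since `Uᶜ` is compact, it splits into `N + 1` pairwise
disjoint nonempty closed pieces `Kᵢ`. Each `Kᵢ` meets `closure U`, so a compact connected set `Pᵢ`
(the trace of a path) joins the base point `u` to `Kᵢ` while avoiding the other pieces. Choose
disjoint open neighbourhoods `Vᵢ ⊇ Kᵢ` whose closures miss the `Pⱼ`, `j ≠ i`. The compact set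
`E = (⋃ Vᵢ)ᶜ` lies in `U`, hence in `Uₙ` for large `n`. If `Uₙ ⊇ E ∪ Vᵢ` for infinitely many
`n`, the component of `u` in `(⋃_{j ≠ i} closure Vⱼ)ᶜ`, which contains `Pᵢ`, would lie in `U` by
the kernel property, although `Pᵢ` meets `Uᶜ`. So for large `n` every `Vᵢ` meets `Uₙᶜ ⊆ ⋃ Vⱼ`,
and `Uₙᶜ` has at least `N + 1` components.
-/

section Topology

open Function

variable {X ι : Type*} [TopologicalSpace X]

theorem exists_finset_card_le_of_forall_card_le {β : Type*} {𝒞 : Set β} {N : ℕ}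
    (h : ∀ t : Finset β, ↑t ⊆ 𝒞 → t.card ≤ N) : ∃ s : Finset β, s.card ≤ N ∧ 𝒞 ⊆ s := by
  have hle : 𝒞.encard ≤ N := by
    by_contra! hlt
    obtain ⟨t, ht𝒞, htcard⟩ := exists_subset_encard_eq (Order.add_one_le_of_lt hlt)
    have htfin : t.Finite := finite_of_encard_eq_coe htcard
    have := h htfin.toFinset (by simpa using ht𝒞)
    rw [htfin.encard_eq_coe_toFinset_card] at htcard
    norm_cast at htcard
    omega
  have hfin : 𝒞.Finite := finite_of_encard_le_coe hle
  refine ⟨hfin.toFinset, ?_, by simp⟩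
  rw [hfin.encard_eq_coe_toFinset_card] at hle
  exact_mod_cast hle

theorem IsPreconnected.subset_of_subset_iUnion {S : Set X} {V : ι → Set X}
    (hS : IsPreconnected S) (hV : ∀ i, IsOpen (V i)) (hdisj : Pairwise (Disjoint on V))
    (hSV : S ⊆ ⋃ i, V i) {i : ι} (hi : (S ∩ V i).Nonempty) : S ⊆ V i := by
  refine hS.subset_left_of_subset_union (v := ⋃ (j) (_ : j ≠ i), V j) (hV i)
    (isOpen_iUnion fun j => isOpen_iUnion fun _ => hV j) ?_ ?_ hi
  · exact disjoint_iUnion_right.2 fun j => disjoint_iUnion_right.2 fun hj => hdisj hj.symm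
  · intro x hx
    obtain ⟨j, hj⟩ := mem_iUnion.1 (hSV hx)
    by_cases hji : j = i
    · exact Or.inl (hji ▸ hj)
    · exact Or.inr (mem_iUnion₂.2 ⟨j, hji, hj⟩)

theorem injective_connectedComponentIn_of_subset_iUnion {C : Set X} {V : ι → Set X}
    (hV : ∀ i, IsOpen (V i)) (hdisj : Pairwise (Disjoint on V)) (hC : C ⊆ ⋃ i, V i)
    {w : ι → X} (hwC : ∀ i, w i ∈ C) (hwV : ∀ i, w i ∈ V i) :
    Injective fun i => connectedComponentIn C (w i) := by
  intro i j (hij : connectedComponentIn C (w i) = connectedComponentIn C (w j))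
  have hsub : connectedComponentIn C (w i) ⊆ V i :=
    isPreconnected_connectedComponentIn.subset_of_subset_iUnion hV hdisj
      ((connectedComponentIn_subset C _).trans hC) ⟨w i, mem_connectedComponentIn (hwC i), hwV i⟩
  have hwj : w j ∈ V i := hsub (hij ▸ mem_connectedComponentIn (hwC j))
  by_contra hne
  exact (hdisj hne).le_bot ⟨hwj, hwV j⟩

theorem exists_isLocallyConstant_apply_eq [CompactSpace X] [T2Space X] [Finite ι] [Nonempty ι]
    {z : ι → X} (hz : Pairwise fun i j => connectedComponent (z i) ≠ connectedComponent (z j)) :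
    ∃ g : X → ι, IsLocallyConstant g ∧ ∀ i, g (z i) = i := by
  have hsep : ∀ i j, ∃ Z : Set X, IsClopen Z ∧ z i ∈ Z ∧ (i ≠ j → z j ∉ Z) := by
    intro i j
    by_cases hij : i = j
    · exact ⟨univ, isClopen_univ, mem_univ _, fun h => (h hij).elim⟩
    · have hzj : z j ∉ connectedComponent (z i) := fun h => hz hij (connectedComponent_eq h)
      rw [connectedComponent_eq_iInter_isClopen] at hzj
      obtain ⟨⟨Z, hZ, hzi⟩, hzj⟩ := by simpa only [mem_iInter, not_forall] using hzj
      exact ⟨Z, hZ, hzi, fun _ => hzj⟩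
  choose Z hZ hzZ hzZ' using hsep
  -- `φ x` records which of the separating clopens contain `x`; it tells the points `z i` apart.
  set φ : X → ι → ι → Bool := fun x i j => (Z i j).boolIndicator x
  have hφ : IsLocallyConstant φ := (IsLocallyConstant.iff_continuous φ).2 <| continuous_pi
    fun i => continuous_pi fun j => (continuous_boolIndicator_iff_isClopen _).2 (hZ i j)
  have hφz : Injective (φ ∘ z) := by
    intro i j hij
    by_contra hne
    have := congrFun (congrFun hij i) j
    simp only [comp_apply, φ, (Z i j).mem_iff_boolIndicator _ |>.1 (hzZ i j),
      (Z i j).notMem_iff_boolIndicator _ |>.1 (hzZ' i j hne)] at this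
    exact Bool.true_eq_false.mp this |>.elim
  exact ⟨invFun (φ ∘ z) ∘ φ, hφ.comp _, leftInverse_invFun hφz⟩

theorem IsCompact.exists_isClosed_partition [T2Space X] [Finite ι] [Nonempty ι] {K : Set X}
    (hK : IsCompact K) {z : ι → X} (hzK : ∀ i, z i ∈ K)
    (hz : Pairwise fun i j => connectedComponentIn K (z i) ≠ connectedComponentIn K (z j)) :
    ∃ P : ι → Set X, (∀ i, IsClosed (P i)) ∧ Pairwise (Disjoint on P) ∧ ⋃ i, P i = K ∧
      ∀ i, z i ∈ P i := by
  have := isCompact_iff_compactSpace.mp hK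
  obtain ⟨g, hg, hgz⟩ := exists_isLocallyConstant_apply_eq (z := fun i => (⟨z i, hzK i⟩ : K))
    fun i j hij h => hz hij <| by
      rw [connectedComponentIn_eq_image (hzK i), connectedComponentIn_eq_image (hzK j), h]
  refine ⟨fun i => Subtype.val '' {x | g x = i}, fun i => ?_, fun i j hij => ?_, ?_,
    fun i => ⟨_, hgz i, rfl⟩⟩
  · exact ((hg.isClosed_fiber i).isCompact.image continuous_subtype_val).isClosed
  · refine (disjoint_image_iff Subtype.val_injective).2 ?_
    exact disjoint_left.2 fun x (hxi : g x = i) (hxj : g x = j) => hij (hxi ▸ hxj)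
  · rw [← image_iUnion, iUnion_eq_univ_iff.2 fun x => ⟨g x, rfl⟩, image_univ,
      Subtype.range_coe]

theorem IsClosed.inter_closure_nonempty_of_union_eq_compl [PreconnectedSpace X]
    {A B U : Set X} (hA : IsClosed A) (hB : IsClosed B) (hAB : Disjoint A B)
    (hABU : A ∪ B = Uᶜ) (hAne : A.Nonempty) (hU : U.Nonempty) : (A ∩ closure U).Nonempty := by
  by_contra hempty
  have hAeq : A = (closure U ∪ B)ᶜ := by
    ext x
    refine ⟨fun hx => ?_, fun hx => ?_⟩
    · exact fun h => h.elim (fun hxU => hempty ⟨x, hx, hxU⟩) (disjoint_left.1 hAB hx)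
    · have : x ∈ A ∪ B := hABU ▸ fun hxU => hx (Or.inl (subset_closure hxU))
      exact this.resolve_right fun hxB => hx (Or.inr hxB)
  have hAopen : IsOpen A := hAeq ▸ (isClosed_closure.union hB).isOpen_compl
  obtain ⟨u, hu⟩ := hU
  rcases isClopen_iff.1 ⟨hA, hAopen⟩ with rfl | rfl
  · exact not_nonempty_empty hAne
  · exact hempty ⟨u, mem_univ u, subset_closure hu⟩

theorem IsOpen.exists_isCompact_isPreconnected_of_mem_closure [LocallyPathConnectedSpace X]
    {G U : Set X} (hG : IsOpen G) (hU : IsPreconnected U) (hUG : U ⊆ G) {u y : X} (hu : u ∈ U)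
    (hy : y ∈ closure U) (hyG : y ∈ G) :
    ∃ P : Set X, IsCompact P ∧ IsPreconnected P ∧ u ∈ P ∧ y ∈ P ∧ P ⊆ G := by
  have hyC : y ∈ connectedComponentIn G u :=
    (hU.subset_closure (subset_insert y U) (insert_subset hy subset_closure)
      |>.subset_connectedComponentIn (mem_insert_of_mem y hu) (insert_subset hyG hUG))
      (mem_insert y U)
  obtain ⟨γ, hγ⟩ := (hG.connectedComponentIn.isConnected_iff_isPathConnected.1
    (isConnected_connectedComponentIn_iff.2 (hUG hu))).joinedIn u
    (mem_connectedComponentIn (hUG hu)) y hyC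
  exact ⟨range γ, isCompact_range γ.continuous, isPreconnected_range γ.continuous,
    ⟨0, γ.source⟩, ⟨1, γ.target⟩,
    (range_subset_iff.2 hγ).trans (connectedComponentIn_subset _ _)⟩

theorem exists_pairwise_disjoint_isOpen_closure_disjoint [NormalSpace X] [Finite ι]
    {K F : ι → Set X} (hK : ∀ i, IsClosed (K i)) (hF : ∀ i, IsClosed (F i))
    (hKK : Pairwise (Disjoint on K)) (hKF : ∀ i, Disjoint (K i) (F i)) :
    ∃ V : ι → Set X, (∀ i, IsOpen (V i)) ∧ (∀ i, K i ⊆ V i) ∧ Pairwise (Disjoint on V) ∧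
      ∀ i, Disjoint (closure (V i)) (F i) := by
  have hW : ∀ i, ∃ W : Set X, IsOpen W ∧ K i ⊆ W ∧
      closure W ⊆ (F i ∪ ⋃ (j) (_ : j ≠ i), K j)ᶜ := fun i =>
    normal_exists_closure_subset (hK i) ((hF i).union (isClosed_iUnion_of_finite fun j =>
      isClosed_iUnion_of_finite fun _ => hK j)).isOpen_compl <|
      subset_compl_iff_disjoint_right.2 <| disjoint_union_right.2
        ⟨hKF i, disjoint_iUnion_right.2 fun j => disjoint_iUnion_right.2 fun hj => hKK hj.symm⟩
  choose W hWo hKW hWcl using hW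
  -- Removing the closures of the other `W j` keeps `K i`, since those closures miss `K i`.
  refine ⟨fun i => W i \ ⋃ (j) (_ : j ≠ i), closure (W j), fun i => ?_, fun i x hx => ?_,
    fun i j hij => ?_, fun i => ?_⟩
  · exact (hWo i).sdiff (isClosed_iUnion_of_finite fun j =>
      isClosed_iUnion_of_finite fun _ => isClosed_closure)
  · refine ⟨hKW i hx, fun hx' => ?_⟩
    obtain ⟨j, hji, hxj⟩ := mem_iUnion₂.1 hx'
    exact hWcl j hxj (Or.inr (mem_iUnion₂.2 ⟨i, hji.symm, hx⟩))
  · exact disjoint_left.2 fun x hxi hxj =>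
      hxi.2 (mem_iUnion₂.2 ⟨j, hij.symm, subset_closure hxj.1⟩)
  · exact ((subset_compl_iff_disjoint_right.1 (hWcl i)).mono_right subset_union_left).mono_left
      (closure_mono sdiff_subset)

theorem exists_isCompact_isPreconnected_not_subset [PreconnectedSpace X]
    [LocallyPathConnectedSpace X] [Finite ι] {U : Set X} {u : X} (hU : IsPreconnected U)
    (hu : u ∈ U) {K : ι → Set X} (hK : ∀ i, IsClosed (K i)) (hdisj : Pairwise (Disjoint on K))
    (hcover : ⋃ i, K i = Uᶜ) {i : ι} (hne : (K i).Nonempty) :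
    ∃ P : Set X, IsCompact P ∧ IsPreconnected P ∧ u ∈ P ∧ ¬ P ⊆ U ∧
      ∀ j, j ≠ i → Disjoint P (K j) := by
  set B := ⋃ (j) (_ : j ≠ i), K j
  have hB : IsClosed B :=
    isClosed_iUnion_of_finite fun j => isClosed_iUnion_of_finite fun _ => hK j
  have hKB : Disjoint (K i) B :=
    disjoint_iUnion_right.2 fun j => disjoint_iUnion_right.2 fun hj => hdisj hj.symm
  have hKBU : K i ∪ B = Uᶜ := (iSup_split_single K i).symm.trans hcover
  obtain ⟨y, hyK, hyU⟩ :=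
    (hK i).inter_closure_nonempty_of_union_eq_compl hB hKB hKBU hne ⟨u, hu⟩
  have hUB : U ⊆ Bᶜ := subset_compl_comm.1 (hKBU ▸ subset_union_right)
  obtain ⟨P, hPc, hPp, huP, hyP, hPB⟩ :=
    hB.isOpen_compl.exists_isCompact_isPreconnected_of_mem_closure hU hUB hu hyU
      (disjoint_left.1 hKB hyK)
  refine ⟨P, hPc, hPp, huP, fun hPU => ?_, fun j hj => ?_⟩
  · exact (hKBU ▸ mem_union_left B hyK : y ∈ Uᶜ) (hPU hyP)
  · exact (subset_compl_iff_disjoint_right.1 hPB).mono_right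
      (subset_iUnion₂ (s := fun j _ => K j) j hj)

end Topology

instance : LocallyPathConnectedSpace (OnePoint ℂ) := by
  have := ChartedSpace.locallyPathConnectedSpace (EuclideanSpace ℝ (Fin 2))
    (Metric.sphere (0 : EuclideanSpace ℝ (Fin 3)) 1)
  exact (onePointEquivSphereOfFinrankEq (ι := Fin 3) (V := ℂ) (by simp)).isOpenEmbedding
    |>.locallyPathConnectedSpace

namespace CaraTendsto

open Function

variable {Us : ℕ → Set (OnePoint ℂ)} {us : ℕ → OnePoint ℂ} {U : Set (OnePoint ℂ)}
  {u : OnePoint ℂ}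

theorem finite_setOf_compl_subset (h : CaraTendsto Us us U u) {A P : Set (OnePoint ℂ)}
    (hA : IsClosed A) (hP : IsPreconnected P) (huP : u ∈ P) (hPA : Disjoint P A)
    (hPU : ¬ P ⊆ U) : {n | Aᶜ ⊆ Us n}.Finite := by
  have hPA' : P ⊆ Aᶜ := subset_compl_iff_disjoint_right.2 hPA
  by_contra hinf
  refine hPU ((hP.subset_connectedComponentIn huP hPA').trans ?_)
  refine h.2.2 _ hA.isOpen_compl.connectedComponentIn
    (isConnected_connectedComponentIn_iff.2 (hPA' huP)) (mem_connectedComponentIn (hPA' huP)) ?_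
  exact Infinite.mono (fun n hn => (connectedComponentIn_subset _ _).trans hn) hinf

theorem exists_injective_connectedComponentIn {ι : Type*} [Finite ι]
    (hconv : CaraTendsto Us us U u) (hU : IsPreconnected U) (hu : u ∈ U)
    {K : ι → Set (OnePoint ℂ)} (hK : ∀ i, IsClosed (K i)) (hdisj : Pairwise (Disjoint on K))
    (hcover : ⋃ i, K i = Uᶜ) (hne : ∀ i, (K i).Nonempty) :
    ∃ n, ∃ w : ι → OnePoint ℂ, (∀ i, w i ∈ (Us n)ᶜ) ∧
      Injective fun i => connectedComponentIn (Us n)ᶜ (w i) := by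
  choose P hPc hPp huP hPU hPK using fun i =>
    exists_isCompact_isPreconnected_not_subset hU hu hK hdisj hcover (hne i)
  obtain ⟨V, hVo, hKV, hVdisj, hVP⟩ := exists_pairwise_disjoint_isOpen_closure_disjoint
    (F := fun i => ⋃ (j) (_ : j ≠ i), P j) hK
    (fun i => isClosed_iUnion_of_finite fun j =>
      isClosed_iUnion_of_finite fun _ => (hPc j).isClosed)
    hdisj (fun i => disjoint_iUnion_right.2 fun j => disjoint_iUnion_right.2 fun hj =>
      (hPK j i hj.symm).symm)
  set E := (⋃ i, V i)ᶜ
  have hEU : E ⊆ U := compl_subset_comm.1 (hcover ▸ iUnion_mono hKV)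
  have hbad : ∀ i, {n | (⋃ (j) (_ : j ≠ i), closure (V j))ᶜ ⊆ Us n}.Finite := fun i =>
    hconv.finite_setOf_compl_subset
      (isClosed_iUnion_of_finite fun j => isClosed_iUnion_of_finite fun _ => isClosed_closure)
      (hPp i) (huP i) (disjoint_iUnion_right.2 fun j => disjoint_iUnion_right.2 fun hj =>
        ((hVP j).mono_right (subset_iUnion₂ (s := fun k _ => P k) i hj.symm)).symm) (hPU i)
  obtain ⟨n, hEn, hn⟩ := ((hconv.2.1 E hEU (isOpen_iUnion hVo).isClosed_compl.isCompact).and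
    (eventually_all.2 fun i => Nat.cofinite_eq_atTop ▸ (hbad i).eventually_cofinite_notMem)).exists
  have hw : ∀ i, ∃ w ∈ V i, w ∉ Us n := fun i => not_subset.1 fun hVi => hn i fun x hx => by
    by_cases hxE : x ∈ E
    · exact hEn hxE
    obtain ⟨j, hxj⟩ := mem_iUnion.1 (not_not.1 hxE)
    by_cases hji : j = i
    · exact hVi (hji ▸ hxj)
    · exact (hx (mem_iUnion₂.2 ⟨j, hji, subset_closure hxj⟩)).elim
  choose w hwV hwU using hw
  exact ⟨n, w, hwU, injective_connectedComponentIn_of_subset_iUnion hVo hVdisj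
    (fun x (hx : x ∉ Us n) => not_not.1 fun hxE => hx (hEn hxE)) hwU hwV⟩

end CaraTendsto

theorem caraTendsto_connectivity_le_general (N : ℕ)
    (Us : ℕ → Set (OnePoint ℂ)) (us : ℕ → OnePoint ℂ)
    (U : Set (OnePoint ℂ)) (u : OnePoint ℂ) (hU : IsPointedDomain U u)
    (hconv : CaraTendsto Us us U u)
    (hcc : ∀ n, ∃ s : Finset (Set (OnePoint ℂ)), s.card ≤ N ∧
      ∀ z ∈ (Us n)ᶜ, connectedComponentIn (Us n)ᶜ z ∈ s) :
    ∃ s : Finset (Set (OnePoint ℂ)), s.card ≤ N ∧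
      ∀ z ∈ Uᶜ, connectedComponentIn Uᶜ z ∈ s := by
  suffices h : ∀ t : Finset (Set (OnePoint ℂ)), ↑t ⊆ connectedComponentIn Uᶜ '' Uᶜ →
      t.card ≤ N by
    obtain ⟨s, hs, hsub⟩ := exists_finset_card_le_of_forall_card_le h
    exact ⟨s, hs, fun z hz => hsub ⟨z, hz, rfl⟩⟩
  intro t ht
  rcases t.eq_empty_or_nonempty with rfl | htne
  · exact Nat.zero_le N
  have := htne.coe_sort
  choose z hzU hzc using fun c : t => ht c.2
  obtain ⟨K, hK, hKdisj, hKcover, hzK⟩ := hU.1.isClosed_compl.isCompact.exists_isClosed_partition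
    hzU fun i j hij h => hij (Subtype.ext ((hzc i).symm.trans (h.trans (hzc j))))
  obtain ⟨n, w, hw, hinj⟩ := hconv.exists_injective_connectedComponentIn hU.2.1.isPreconnected
    hU.2.2 hK hKdisj hKcover fun i => ⟨z i, hzK i⟩
  obtain ⟨s, hs, hsmem⟩ := hcc n
  calc t.card = Fintype.card t := (Fintype.card_coe t).symm
    _ ≤ Fintype.card s := Fintype.card_le_of_injective (fun i => ⟨_, hsmem _ (hw i)⟩)
        fun i j hij => hinj (congrArg Subtype.val hij)
    _ ≤ N := (Fintype.card_coe s).symm ▸ hs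

/-- Connectivity cannot increase under Carathéodory limits: if each `Us n` is at most
`N`-connected (its complement has at most `N` connected components) and
`(Us n, us n) → (U, u)` in the Carathéodory topology with `(U, u)` a pointed domain,
then `U` is at most `N`-connected. -/
theorem caraTendsto_connectivity_le (N : ℕ) (hN : 1 ≤ N)
    (Us : ℕ → Set (OnePoint ℂ)) (us : ℕ → OnePoint ℂ)
    (hUs : ∀ n, IsPointedDomain (Us n) (us n))
    (U : Set (OnePoint ℂ)) (u : OnePoint ℂ) (hU : IsPointedDomain U u)
    (hconv : CaraTendsto Us us U u)
    (hcc : ∀ n, ∃ s : Finset (Set (OnePoint ℂ)), s.card ≤ N ∧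
      ∀ z ∈ (Us n)ᶜ, connectedComponentIn (Us n)ᶜ z ∈ s) :
    ∃ s : Finset (Set (OnePoint ℂ)), s.card ≤ N ∧
      ∀ z ∈ Uᶜ, connectedComponentIn Uᶜ z ∈ s :=
  caraTendsto_connectivity_le_general N Us us U u hU hconv hcc
end

section
/- Every sequence (U_n, u_n) of pointed domains in the Riemann sphere ℂ̂ has a subsequence which converges in the Carathéodory topology, where the limit (U, u) is either a pointed domain or a degenerate pair with U = {u}. -/
/-!
Extract a subsequence along which the base points converge to some `u` and, for every set `s` of a
countable basis of `ℂ̂`, the inclusion `s ⊆ Uₙ` holds either eventually or only finitely often.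
Let `K` be the set of points having a neighbourhood contained in all but finitely many `Uₙ`.
Any open set contained in infinitely many `Uₙ` is covered by basis sets with the same property,
hence lies in `K`. If `u ∈ K`, the component of `K` containing `u` is the Carathéodory limit,
local connectedness of `ℂ̂` making it open; otherwise the limit is degenerate.
-/

open Filter Topology Set
open scoped OnePoint

open TopologicalSpace

theorem exists_strictMono_frequently_imp_eventually {ι : Type*} [Countable ι]
    (p : ι → ℕ → Prop) :
    ∃ φ : ℕ → ℕ, StrictMono φ ∧ ∀ i, (∃ᶠ k in atTop, p i (φ k)) → ∀ᶠ k in atTop, p i (φ k) := by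
  classical
  -- a convergent subsequence in the Cantor space `ι → Bool` of truth values
  obtain ⟨b, -, φ, hφ, hb⟩ :=
    isCompact_univ.tendsto_subseq (x := fun n i => decide (p i n)) fun _ => mem_univ _
  refine ⟨φ, hφ, fun i hfreq => ?_⟩
  have hconst : ∀ᶠ k in atTop, decide (p i (φ k)) = b i :=
    tendsto_nhds.1 (tendsto_pi_nhds.1 hb i) {b i} (isOpen_discrete _) rfl
  cases hbi : b i
  · exact absurd hfreq (not_frequently.2 (hconst.mono fun k hk => by simpa [hbi] using hk))
  · exact hconst.mono fun k hk => by simpa [hbi] using hk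

section Kernel

variable {X : Type*} [TopologicalSpace X]

def caraKernel (V : ℕ → Set X) : Set X :=
  {x | ∃ t ∈ 𝓝 x, ∀ᶠ k in atTop, t ⊆ V k}

theorem isOpen_caraKernel (V : ℕ → Set X) : IsOpen (caraKernel V) := by
  rw [isOpen_iff_forall_mem_open]
  rintro x ⟨t, ht, hV⟩
  exact ⟨interior t,
    fun y hy => ⟨interior t, isOpen_interior.mem_nhds hy, hV.mono fun _ => interior_subset.trans⟩,
    isOpen_interior, mem_interior_iff_mem_nhds.2 ht⟩

theorem IsCompact.eventually_subset_of_subset_caraKernel {V : ℕ → Set X} {C : Set X}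
    (hC : IsCompact C) (hCV : C ⊆ caraKernel V) : ∀ᶠ k in atTop, C ⊆ V k := by
  refine hC.induction_on (p := fun s => ∀ᶠ k in atTop, s ⊆ V k) (by simp)
    (fun _ _ hst ht => ht.mono fun _ => hst.trans)
    (fun _ _ hs ht => (hs.and ht).mono fun _ hk => union_subset hk.1 hk.2) fun x hx => ?_
  obtain ⟨t, ht, hV⟩ := hCV hx
  exact ⟨t, mem_nhdsWithin_of_mem_nhds ht, hV⟩

theorem TopologicalSpace.IsTopologicalBasis.subset_caraKernel_of_frequently {B : Set (Set X)}
    (hB : IsTopologicalBasis B) {V : ℕ → Set X}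
    (hV : ∀ s ∈ B, (∃ᶠ k in atTop, s ⊆ V k) → ∀ᶠ k in atTop, s ⊆ V k)
    {N : Set X} (hN : IsOpen N) (hfreq : ∃ᶠ k in atTop, N ⊆ V k) : N ⊆ caraKernel V := by
  intro x hx
  obtain ⟨s, hsB, hxs, hsN⟩ := hB.exists_subset_of_mem_open hx hN
  exact ⟨s, (hB.isOpen hsB).mem_nhds hxs, hV s hsB (hfreq.mono fun _ => hsN.trans)⟩

end Kernel

noncomputable def riemannSphereHomeoSphere :
    OnePoint ℂ ≃ₜ Metric.sphere (0 : EuclideanSpace ℝ (Fin 3)) 1 :=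
  onePointEquivSphereOfFinrankEq (by simp)

instance : SecondCountableTopology (OnePoint ℂ) :=
  riemannSphereHomeoSphere.secondCountableTopology

instance : LocallyConnectedSpace (OnePoint ℂ) :=
  haveI := ChartedSpace.locallyConnectedSpace (EuclideanSpace ℝ (Fin 2))
    (Metric.sphere (0 : EuclideanSpace ℝ (Fin 3)) 1)
  riemannSphereHomeoSphere.locallyConnectedSpace

section Caratheodory

variable {Us : ℕ → Set (OnePoint ℂ)} {us : ℕ → OnePoint ℂ} {u : OnePoint ℂ}

theorem isPointedDomain_connectedComponentIn_caraKernel (hu : u ∈ caraKernel Us) :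
    IsPointedDomain (connectedComponentIn (caraKernel Us) u) u :=
  ⟨(isOpen_caraKernel Us).connectedComponentIn, isConnected_connectedComponentIn_iff.2 hu,
    mem_connectedComponentIn hu⟩

theorem caraTendsto_connectedComponentIn_caraKernel (hus : Tendsto us atTop (𝓝 u))
    (hstable : ∀ N, IsOpen N → (∃ᶠ k in atTop, N ⊆ Us k) → N ⊆ caraKernel Us) :
    CaraTendsto Us us (connectedComponentIn (caraKernel Us) u) u :=
  ⟨hus, fun _ hCU hC => hC.eventually_subset_of_subset_caraKernel
      (hCU.trans (connectedComponentIn_subset _ _)),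
    fun N hNo hNc huN hinf => hNc.isPreconnected.subset_connectedComponentIn huN
      (hstable N hNo (Nat.frequently_atTop_iff_infinite.2 hinf))⟩

theorem caraTendstoDeg_of_notMem_caraKernel (hus : Tendsto us atTop (𝓝 u))
    (hstable : ∀ N, IsOpen N → (∃ᶠ k in atTop, N ⊆ Us k) → N ⊆ caraKernel Us)
    (hu : u ∉ caraKernel Us) : CaraTendstoDeg Us us u :=
  ⟨hus, fun N hNo _ huN => Set.not_infinite.1 fun hinf =>
    hu (hstable N hNo (Nat.frequently_atTop_iff_infinite.2 hinf) huN)⟩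

end Caratheodory

theorem caraTendsto_compactness_general (Us : ℕ → Set (OnePoint ℂ)) (us : ℕ → OnePoint ℂ) :
    ∃ s : ℕ → ℕ, StrictMono s ∧
      ((∃ U u, IsPointedDomain U u ∧
          CaraTendsto (fun k => Us (s k)) (fun k => us (s k)) U u) ∨
        (∃ u, CaraTendstoDeg (fun k => Us (s k)) (fun k => us (s k)) u)) := by
  obtain ⟨u, -, φ, hφ, hu⟩ := isCompact_univ.tendsto_subseq (x := us) fun _ => mem_univ _
  obtain ⟨ψ, hψ, hψB⟩ := exists_strictMono_frequently_imp_eventually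
    fun (s : countableBasis (OnePoint ℂ)) k => (s : Set (OnePoint ℂ)) ⊆ Us (φ k)
  have hlim : Tendsto (fun k => us (φ (ψ k))) atTop (𝓝 u) := hu.comp hψ.tendsto_atTop
  have hstable : ∀ N, IsOpen N → (∃ᶠ k in atTop, N ⊆ Us (φ (ψ k))) →
      N ⊆ caraKernel fun k => Us (φ (ψ k)) := fun _ =>
    (isBasis_countableBasis _).subset_caraKernel_of_frequently fun s hs => hψB ⟨s, hs⟩
  refine ⟨φ ∘ ψ, hφ.comp hψ, ?_⟩
  by_cases hker : u ∈ caraKernel fun k => Us (φ (ψ k))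
  · exact Or.inl ⟨_, u, isPointedDomain_connectedComponentIn_caraKernel hker,
      caraTendsto_connectedComponentIn_caraKernel hlim hstable⟩
  · exact Or.inr ⟨u, caraTendstoDeg_of_notMem_caraKernel hlim hstable hker⟩

/-- Compactness of the Carathéodory topology: every sequence of pointed domains in
the Riemann sphere has a subsequence converging in the Carathéodory topology, the
limit being either a pointed domain or a degenerate pair `({u}, u)`. -/
theorem caraTendsto_compactness (Us : ℕ → Set (OnePoint ℂ)) (us : ℕ → OnePoint ℂ)
    (hUs : ∀ n, IsPointedDomain (Us n) (us n)) :
    ∃ s : ℕ → ℕ, StrictMono s ∧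
      ((∃ U u, IsPointedDomain U u ∧
          CaraTendsto (fun k => Us (s k)) (fun k => us (s k)) U u) ∨
        (∃ u, CaraTendstoDeg (fun k => Us (s k)) (fun k => us (s k)) u)) :=
  caraTendsto_compactness_general Us us
end

section
/- Define a sequence of quadratic polynomials {P_m}_{m≥1} by P_m(z) = (z − 3)² if m = (j+1)(j+2)/2 − 1 for some integer j ≥ 1, and P_m(z) = z² otherwise. Then all critical points of this sequence escape to infinity: for every m ≥ 0, if c denotes the critical point of P_{m+1} (that is, c = 3 if P_{m+1}(z) = (z − 3)² and c = 0 if P_{m+1}(z) = z²), then |Q_{m,n}(c)| → ∞ as n → ∞. -/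
open Filter Topology

/-- The `m`-th polynomial of the sequence: `P_m(z) = (z - 3)²` if
`m = (j+1)(j+2)/2 - 1` for some `j ≥ 1`, and `P_m(z) = z²` otherwise. -/
noncomputable def seqP (m : ℕ) : ℂ → ℂ :=
  open Classical in
  if ∃ j : ℕ, 1 ≤ j ∧ m = (j + 1) * (j + 2) / 2 - 1 then fun z => (z - 3) ^ 2
  else fun z => z ^ 2

/-- `Q_{m,n} = P_n ∘ ⋯ ∘ P_{m+1}` for the sequence `seqP`. -/
noncomputable def seqQ (m n : ℕ) (z : ℂ) : ℂ :=
  (List.range (n - m)).foldl (fun w k => seqP (m + k + 1) w) z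

/-- The critical point of `P_m`: `3` if `P_m(z) = (z - 3)²` and `0` if
`P_m(z) = z²`. -/
noncomputable def seqCrit (m : ℕ) : ℂ :=
  open Classical in
  if ∃ j : ℕ, 1 ≤ j ∧ m = (j + 1) * (j + 2) / 2 - 1 then 3 else 0

/-! After `P_{m+1}` sends its critical point to `0`, the orbit sits at the fixed point `0` of `z²`
until the next index `k` with `P_k(z) = (z - 3)²`, which sends `0` to `9`. From then on the orbit
stays in `‖z‖ ≥ 9`, where every `P_k` at least quadruples the norm, so it grows geometrically. -/

lemma tendsto_atTop_of_le_of_mul_le_succ {u : ℕ → ℝ} {a r : ℝ} (ha : 0 < a) (hr : 1 < r)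
    (h₀ : a ≤ u 0) (hu : ∀ n, a ≤ u n → r * u n ≤ u (n + 1)) : Tendsto u atTop atTop := by
  have hle : ∀ n, a ≤ u n := by
    intro n
    induction n with
    | zero => exact h₀
    | succ n ih => nlinarith [hu n ih]
  exact tendsto_atTop_of_geom_le (ha.trans_le h₀) hr fun n => hu n (hle n)

def IsShiftIndex (m : ℕ) : Prop := ∃ j : ℕ, 1 ≤ j ∧ m = (j + 1) * (j + 2) / 2 - 1

lemma exists_isShiftIndex_gt (n : ℕ) : ∃ k, n < k ∧ IsShiftIndex k := by
  refine ⟨(n + 2) * (n + 3) / 2 - 1, ?_, n + 1, by omega, rfl⟩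
  have : n + 2 ≤ (n + 2) * (n + 3) / 2 := by
    rw [Nat.le_div_iff_mul_le two_pos]
    nlinarith
  omega

lemma seqP_of_isShiftIndex {m : ℕ} (h : IsShiftIndex m) : seqP m = fun z => (z - 3) ^ 2 :=
  if_pos h

lemma seqP_of_not_isShiftIndex {m : ℕ} (h : ¬ IsShiftIndex m) : seqP m = fun z => z ^ 2 :=
  if_neg h

lemma seqCrit_of_isShiftIndex {m : ℕ} (h : IsShiftIndex m) : seqCrit m = 3 :=
  if_pos h

lemma seqCrit_of_not_isShiftIndex {m : ℕ} (h : ¬ IsShiftIndex m) : seqCrit m = 0 :=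
  if_neg h

lemma seqP_seqCrit (m : ℕ) : seqP m (seqCrit m) = 0 := by
  by_cases h : IsShiftIndex m
  · simp [seqP_of_isShiftIndex h, seqCrit_of_isShiftIndex h]
  · simp [seqP_of_not_isShiftIndex h, seqCrit_of_not_isShiftIndex h]

lemma seqQ_self (m : ℕ) (z : ℂ) : seqQ m m z = z := by
  simp [seqQ]

lemma seqQ_succ {m n : ℕ} (h : m ≤ n) (z : ℂ) :
    seqQ m (n + 1) z = seqP (n + 1) (seqQ m n z) := by
  unfold seqQ
  rw [show n + 1 - m = n - m + 1 by omega, List.range_succ, List.foldl_append]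
  simp only [List.foldl_cons, List.foldl_nil]
  congr 2
  omega

lemma four_mul_norm_le_norm_seqP (k : ℕ) {z : ℂ} (hz : 9 ≤ ‖z‖) : 4 * ‖z‖ ≤ ‖seqP k z‖ := by
  by_cases h : IsShiftIndex k
  · have htri : ‖z‖ - 3 ≤ ‖z - 3‖ := by simpa using norm_sub_norm_le z 3
    rw [seqP_of_isShiftIndex h, norm_pow]
    nlinarith
  · rw [seqP_of_not_isShiftIndex h, norm_pow]
    nlinarith

lemma nine_le_norm_seqP_of_isShiftIndex {k : ℕ} (hk : IsShiftIndex k) {z : ℂ}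
    (hz : z = 0 ∨ 9 ≤ ‖z‖) : 9 ≤ ‖seqP k z‖ := by
  rcases hz with rfl | hz
  · norm_num [seqP_of_isShiftIndex hk]
  · linarith [four_mul_norm_le_norm_seqP k hz]

lemma seqP_eq_zero_or_nine_le_norm (k : ℕ) {z : ℂ} (hz : z = 0 ∨ 9 ≤ ‖z‖) :
    seqP k z = 0 ∨ 9 ≤ ‖seqP k z‖ := by
  by_cases hk : IsShiftIndex k
  · exact Or.inr (nine_le_norm_seqP_of_isShiftIndex hk hz)
  · rcases hz with rfl | hz
    · simp [seqP_of_not_isShiftIndex hk]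
    · exact Or.inr (by linarith [four_mul_norm_le_norm_seqP k hz])

/-- All critical points of the sequence escape to infinity: for every `m ≥ 0`, the
orbit under `Q_{m,n}` of the critical point of `P_{m+1}` tends to infinity. -/
theorem seq_critical_points_escape :
    ∀ m : ℕ, Tendsto (fun n => ‖seqQ m n (seqCrit (m + 1))‖) atTop atTop := by
  intro m
  set c := seqCrit (m + 1)
  have horbit : ∀ n, m + 1 ≤ n → seqQ m n c = 0 ∨ 9 ≤ ‖seqQ m n c‖ := by
    intro n hn
    induction n, hn using Nat.le_induction with
    | base => exact Or.inl (by rw [seqQ_succ le_rfl, seqQ_self, seqP_seqCrit])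
    | succ n hn ih =>
      rw [seqQ_succ (by omega)]
      exact seqP_eq_zero_or_nine_le_norm _ ih
  obtain ⟨N, hN, hNshift⟩ := exists_isShiftIndex_gt (m + 1)
  obtain ⟨N, rfl⟩ : ∃ n, N = n + 1 := ⟨N - 1, by omega⟩
  have hstart : 9 ≤ ‖seqQ m (N + 1) c‖ := by
    rw [seqQ_succ (by omega)]
    exact nine_le_norm_seqP_of_isShiftIndex hNshift (horbit N (by omega))
  refine (tendsto_add_atTop_iff_nat (N + 1)).1 <|
    tendsto_atTop_of_le_of_mul_le_succ (by norm_num : (0 : ℝ) < 9) (by norm_num : (1 : ℝ) < 4)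
      (by simpa using hstart) fun n hn => ?_
  rw [show n + 1 + (N + 1) = n + (N + 1) + 1 by omega, seqQ_succ (by omega)]
  exact four_mul_norm_le_norm_seqP _ hn
end
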